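/- arXiv:0906.0696 — 2 statements merged into one kernel-verified Lean document; each statement's English description precedes it below -/
import Mathlib

section
/- For all nonnegative integers j and 1 \le \ell \le j+1, \sum_{r=\ell}^{j} B_{j-r} * C(j,r) * C(r,\ell) + B_{j-\ell+1} * C(j, \ell-1) = B_{j-\ell+1} * C(j+1, \ell). -/
/-!
Since `C(j, r) C(r, ℓ) = C(j, ℓ) C(j - ℓ, r - ℓ)`, the sum over `r` is `C(j, ℓ)` times the right-hand
side of the Bell recurrence `B (m + 1) = ∑ s ≤ m, C(m, s) B (m - s)` at `m = j - ℓ`, and Pascal's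
rule `C(j, ℓ) + C(j, ℓ - 1) = C(j + 1, ℓ)` finishes. The Bell recurrence for the Stirling-sum
definition of `bell` follows from `S(n + 1, k + 1) = ∑ m ≤ n, C(n, m) S(m, k)`.
-/

/-- Stirling numbers of the second kind. -/
def stirling : ℕ → ℕ → ℕ
  | 0, 0 => 1
  | 0, _ + 1 => 0
  | _ + 1, 0 => 0
  | n + 1, k + 1 => stirling n k + (k + 1) * stirling n (k + 1)

/-- The `n`-th Bell number. -/
def bell (n : ℕ) : ℕ := ∑ k ∈ Finset.range (n + 1), stirling n k

open Finset

theorem stirling_eq_stirlingSecond : stirling = Nat.stirlingSecond := by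
  funext n k
  induction n generalizing k with
  | zero => cases k <;> rfl
  | succ n ih =>
    cases k with
    | zero => rfl
    | succ k => rw [stirling, Nat.stirlingSecond_succ_succ, ih, ih, add_comm]

theorem sum_range_succ_choose_succ_mul (f : ℕ → ℕ) (n : ℕ) :
    ∑ m ∈ range (n + 2), (n + 1).choose m * f m =
      ∑ m ∈ range (n + 1), n.choose m * f m + ∑ m ∈ range (n + 1), n.choose m * f (m + 1) := by
  have h : ∑ m ∈ range (n + 1), n.choose m * f m = ∑ m ∈ range (n + 2), n.choose m * f m := by
    rw [sum_range_succ _ (n + 1), Nat.choose_succ_self, zero_mul, add_zero]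
  rw [h, sum_range_succ' _ (n + 1), sum_range_succ' (fun m => n.choose m * f m) (n + 1)]
  simp only [Nat.choose_succ_succ', add_mul, sum_add_distrib, Nat.choose_zero_right]
  ring

namespace Nat

theorem stirlingSecond_succ_succ_eq_sum (n k : ℕ) :
    stirlingSecond (n + 1) (k + 1) = ∑ m ∈ range (n + 1), n.choose m * stirlingSecond m k := by
  induction n generalizing k with
  | zero => cases k <;> simp [stirlingSecond]
  | succ n ih =>
    rw [sum_range_succ_choose_succ_mul, ← ih, stirlingSecond_succ_succ]
    cases k with
    | zero => simp [stirlingSecond_one_right]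
    | succ k =>
      simp only [stirlingSecond_succ_succ, mul_add, sum_add_distrib, mul_left_comm _ (k + 1),
        ← mul_sum, ← ih]
      ring

theorem bell_succ_eq_sum_choose_mul_bell (n : ℕ) :
    (n + 1).bell = ∑ m ∈ range (n + 1), n.choose m * m.bell := by
  rw [bell_succ, ← range_succ_eq_Iic, ← sum_range_reflect]
  refine sum_congr rfl fun m hm => ?_
  rw [mem_range] at hm
  rw [add_tsub_cancel_right, choose_symm (by omega), tsub_tsub_cancel_of_le (by omega)]

theorem sum_range_stirlingSecond (n : ℕ) :
    ∑ k ∈ range (n + 1), stirlingSecond n k = n.bell := by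
  induction n using Nat.strong_induction_on with
  | _ n ih =>
  cases n with
  | zero => simp [stirlingSecond]
  | succ n =>
    simp only [sum_range_succ' _ (n + 1), stirlingSecond_succ_zero, add_zero,
      stirlingSecond_succ_succ_eq_sum, bell_succ_eq_sum_choose_mul_bell]
    rw [sum_comm]
    refine sum_congr rfl fun m hm => ?_
    rw [mem_range] at hm
    rw [← mul_sum, ← ih m (by omega)]
    congr 1
    refine (sum_subset (range_subset_range.2 (by omega)) fun k _ hk => ?_).symm
    exact stirlingSecond_eq_zero_of_lt (by simpa using hk)

end Nat

theorem bell_eq_nat_bell : bell = Nat.bell := by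
  funext n
  rw [bell, stirling_eq_stirlingSecond, Nat.sum_range_stirlingSecond]

theorem sum_Icc_mul_choose_mul_choose (f : ℕ → ℕ) (j ℓ : ℕ) :
    ∑ r ∈ Icc ℓ j, f (j - r) * j.choose r * r.choose ℓ =
      j.choose ℓ * ∑ s ≤ j - ℓ, (j - ℓ).choose s * f (j - ℓ - s) := by
  rcases lt_or_ge j ℓ with hj | hj
  · rw [Icc_eq_empty_of_lt hj, Nat.choose_eq_zero_of_lt hj, sum_empty, zero_mul]
  obtain ⟨n, rfl⟩ := Nat.exists_eq_add_of_le hj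
  rw [← Ico_add_one_right_eq_Icc, sum_Ico_eq_sum_range, ← Nat.range_succ_eq_Iic, mul_sum]
  refine sum_congr (by rw [add_assoc, add_tsub_cancel_left, add_tsub_cancel_left]) fun s _ => ?_
  rw [mul_assoc, Nat.choose_mul (Nat.le_add_right ℓ s), Nat.add_sub_add_left,
    add_tsub_cancel_left, add_tsub_cancel_left]
  ring

theorem coefficient_identity_general (j ℓ : ℕ) (h1 : 1 ≤ ℓ) :
    (∑ r ∈ Finset.Icc ℓ j, bell (j - r) * Nat.choose j r * Nat.choose r ℓ) +
        bell (j - ℓ + 1) * Nat.choose j (ℓ - 1) =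
      bell (j - ℓ + 1) * Nat.choose (j + 1) ℓ := by
  obtain ⟨l, rfl⟩ := Nat.exists_eq_add_of_le' h1
  rw [sum_Icc_mul_choose_mul_choose, bell_eq_nat_bell, ← Nat.bell_succ,
    Nat.choose_succ_succ', add_tsub_cancel_right]
  ring

theorem coefficient_identity (j ℓ : ℕ) (h1 : 1 ≤ ℓ) (h2 : ℓ ≤ j + 1) :
    (∑ r ∈ Finset.Icc ℓ j, bell (j - r) * Nat.choose j r * Nat.choose r ℓ) +
        bell (j - ℓ + 1) * Nat.choose j (ℓ - 1) =
      bell (j - ℓ + 1) * Nat.choose (j + 1) ℓ :=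
  coefficient_identity_general j ℓ h1
end

section
/- For every prime p and positive integer m, B_{p^m} \equiv m + 1 (mod p). -/
open Polynomial Finset

lemma stirling_eq_zero_of_lt : ∀ {n k : ℕ}, n < k → stirling n k = 0
  | 0, 0, h => absurd h (lt_irrefl 0)
  | 0, _ + 1, _ => rfl
  | n + 1, 0, h => absurd h (by omega)
  | n + 1, k + 1, h => by
    rw [stirling, stirling_eq_zero_of_lt (by omega), stirling_eq_zero_of_lt (by omega)]
    simp

lemma stirling_zero_right (n : ℕ) : stirling (n + 1) 0 = 0 := rfl

/-- Falling factorial polynomial over `ZMod p`. -/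
noncomputable def ffp (p k : ℕ) : Polynomial (ZMod p) :=
  ∏ i ∈ Finset.range k, (Polynomial.X - Polynomial.C (i : ZMod p))

lemma ffp_monic (p k : ℕ) : (ffp p k).Monic :=
  monic_prod_of_monic _ _ fun _ _ => monic_X_sub_C _

lemma ffp_natDegree (p : ℕ) [Nontrivial (ZMod p)] (k : ℕ) : (ffp p k).natDegree = k := by
  rw [ffp, natDegree_prod_of_monic _ _ fun _ _ => monic_X_sub_C _]
  simp only [natDegree_X_sub_C]
  simp

lemma ffp_zero (p : ℕ) : ffp p 0 = 1 := by simp [ffp]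

lemma ffp_one (p : ℕ) : ffp p 1 = X := by simp [ffp]

lemma X_mul_ffp (p k : ℕ) :
    X * ffp p k = ffp p (k + 1) + C (k : ZMod p) * ffp p k := by
  rw [ffp, ffp, Finset.prod_range_succ]
  ring

/-- The fundamental Stirling number expansion of `X^n` in falling factorials. -/
lemma X_pow_eq_sum_stirling (p n : ℕ) :
    (X : Polynomial (ZMod p)) ^ n
      = ∑ k ∈ Finset.range (n + 1), C ((stirling n k : ZMod p)) * ffp p k := by
  induction n with
  | zero => simp [ffp, stirling]
  | succ n ih =>
    have step1 : (X : Polynomial (ZMod p)) ^ (n + 1)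
        = (∑ k ∈ Finset.range (n + 1), C ((stirling n k : ZMod p)) * ffp p (k + 1))
          + ∑ k ∈ Finset.range (n + 1), C (((k * stirling n k : ℕ)) : ZMod p) * ffp p k := by
      rw [pow_succ, mul_comm, ih, Finset.mul_sum, ← Finset.sum_add_distrib]
      refine Finset.sum_congr rfl fun k _ => ?_
      rw [Nat.cast_mul, map_mul, mul_left_comm, X_mul_ffp]
      ring
    have step2 : ∑ k ∈ Finset.range (n + 1), C (((k * stirling n k : ℕ)) : ZMod p) * ffp p k
        = ∑ k ∈ Finset.range (n + 1),
            C ((((k + 1) * stirling n (k + 1) : ℕ)) : ZMod p) * ffp p (k + 1) := by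
      have htop : ∑ k ∈ Finset.range (n + 2), C (((k * stirling n k : ℕ)) : ZMod p) * ffp p k
          = ∑ k ∈ Finset.range (n + 1), C (((k * stirling n k : ℕ)) : ZMod p) * ffp p k := by
        rw [Finset.sum_range_succ, stirling_eq_zero_of_lt (Nat.lt_succ_self n)]
        simp
      rw [← htop,
        Finset.sum_range_succ' (fun k => C (((k * stirling n k : ℕ)) : ZMod p) * ffp p k) (n + 1)]
      simp
    rw [step1, step2, ← Finset.sum_add_distrib,
      Finset.sum_range_succ' (fun k => C ((stirling (n + 1) k : ZMod p)) * ffp p k) (n + 1)]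
    rw [stirling_zero_right]
    push_cast
    rw [C_0, zero_mul, add_zero]
    refine Finset.sum_congr rfl fun k _ => ?_
    rw [show stirling (n + 1) (k + 1) = stirling n k + (k + 1) * stirling n (k + 1) from rfl]
    simp only [Nat.cast_add, Nat.cast_mul, Nat.cast_one, map_add, map_mul, map_one]
    ring

section Prime

variable (p : ℕ) [hp : Fact p.Prime]

lemma ffp_eq_prod_univ : ffp p p = ∏ a : ZMod p, (X - C a) := by
  rw [ffp]
  refine Finset.prod_nbij' (fun i => (i : ZMod p)) (fun a => a.val) ?_ ?_ ?_ ?_ ?_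
  · intro a _; exact Finset.mem_univ _
  · intro a _; exact Finset.mem_range.mpr (ZMod.val_lt a)
  · intro a ha; exact ZMod.val_cast_of_lt (Finset.mem_range.mp ha)
  · intro a _; exact ZMod.natCast_rightInverse a
  · intro a _; rfl

lemma ffp_card : ffp p p = X ^ p - X := by
  have hq : Fintype.card (ZMod p) = p := ZMod.card p
  have h0 := FiniteField.roots_X_pow_card_sub_X (ZMod p)
  rw [hq] at h0
  have hmon : (X ^ p - X : Polynomial (ZMod p)).Monic := by
    refine (monic_X_pow p).sub_of_left ?_
    rw [degree_X_pow, degree_X]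
    exact_mod_cast hp.out.one_lt
  have hcard : Multiset.card (X ^ p - X : Polynomial (ZMod p)).roots
      = (X ^ p - X : Polynomial (ZMod p)).natDegree := by
    rw [h0, FiniteField.X_pow_card_sub_X_natDegree_eq _ hp.out.one_lt]
    simpa using hq
  have := prod_multiset_X_sub_C_of_monic_of_roots_card_eq hmon hcard
  rw [h0] at this
  rw [ffp_eq_prod_univ, ← this]
  rfl

lemma X_pow_p : (X : Polynomial (ZMod p)) ^ p = X + ffp p p := by
  rw [ffp_card]; ring

lemma ffp_p_mul (c : ℕ) : ffp p (p * c) = (ffp p p) ^ c := by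
  induction c with
  | zero => simp [ffp]
  | succ c ih =>
    have h : p * (c + 1) = p * c + p := by ring
    rw [h, ffp, Finset.prod_range_add, ← ffp, ih, pow_succ]
    congr 1
    rw [ffp]
    refine Finset.prod_congr rfl fun i _ => ?_
    congr 1
    push_cast
    simp

lemma X_pow_p_pow (m : ℕ) :
    (X : Polynomial (ZMod p)) ^ (p ^ m) = X + ∑ j ∈ Finset.range m, (ffp p p) ^ (p ^ j) := by
  induction m with
  | zero => simp
  | succ m ih =>
    rw [pow_succ, pow_mul, ih, add_pow_char, sum_pow_char, X_pow_p p,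
      Finset.sum_range_succ' (fun j => (ffp p p) ^ (p ^ j)) m]
    have h : ∀ j ∈ Finset.range m, ((ffp p p) ^ (p ^ j)) ^ p = (ffp p p) ^ (p ^ (j + 1)) := by
      intro j _
      rw [← pow_mul, ← pow_succ]
    rw [Finset.sum_congr rfl h, pow_zero, pow_one]
    ring

lemma X_pow_p_pow' (m : ℕ) :
    (X : Polynomial (ZMod p)) ^ (p ^ m) = ∑ j ∈ Finset.range (m + 1), ffp p (p ^ j) := by
  rw [X_pow_p_pow, Finset.sum_range_succ' (fun j => ffp p (p ^ j)) m]
  have h : ∀ j ∈ Finset.range m, ffp p (p ^ (j + 1)) = (ffp p p) ^ (p ^ j) := by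
    intro j _
    rw [pow_succ, mul_comm, ffp_p_mul]
  rw [Finset.sum_congr rfl h, pow_zero, ffp_one]
  ring

/-- Coefficient extraction: falling factorials are linearly independent. -/
lemma ffp_indep (N : ℕ) : ∀ (c : ℕ → ZMod p),
    (∑ k ∈ Finset.range (N + 1), C (c k) * ffp p k = 0) → ∀ k ≤ N, c k = 0 := by
  induction N with
  | zero =>
    intro c h k hk
    interval_cases k
    rw [Finset.sum_range_one, ffp_zero, mul_one] at h
    exact (C_eq_zero).mp h
  | succ N ih =>
    intro c h k hk
    have htop : c (N + 1) = 0 := by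
      have hc := congrArg (fun q => Polynomial.coeff q (N + 1)) h
      simp only [Polynomial.finset_sum_coeff, Polynomial.coeff_C_mul,
        Polynomial.coeff_zero] at hc
      rw [Finset.sum_eq_single (N + 1)] at hc
      · have h1 : (ffp p (N + 1)).coeff (N + 1) = 1 := by
          have h2 := (ffp_monic p (N + 1)).coeff_natDegree
          rwa [ffp_natDegree] at h2
        rwa [h1, mul_one] at hc
      · intro b hb hbne
        rw [Polynomial.coeff_eq_zero_of_natDegree_lt, mul_zero]
        rw [ffp_natDegree]
        exact lt_of_le_of_ne (Nat.lt_succ_iff.mp (Finset.mem_range.mp hb)) hbne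
      · intro hmem
        exact absurd (Finset.self_mem_range_succ (N + 1)) hmem
    rcases Nat.lt_succ_iff_lt_or_eq.mp (Nat.lt_succ_of_le hk) with h' | h'
    · refine ih c ?_ k (Nat.lt_succ_iff.mp h')
      rw [Finset.sum_range_succ, htop, map_zero, zero_mul, add_zero] at h
      exact h
    · rw [h']; exact htop

lemma ffp_ext (N : ℕ) (c d : ℕ → ZMod p)
    (h : ∑ k ∈ Finset.range (N + 1), C (c k) * ffp p k
       = ∑ k ∈ Finset.range (N + 1), C (d k) * ffp p k) :
    ∀ k ≤ N, c k = d k := by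
  intro k hk
  have h0 : ∑ k ∈ Finset.range (N + 1), C ((fun k => c k - d k) k) * ffp p k = 0 := by
    simp only [map_sub, sub_mul, Finset.sum_sub_distrib, h, sub_self]
  have := ffp_indep p N _ h0 k hk
  simpa [sub_eq_zero] using this

end Prime

theorem bell_prime_pow_mod (p m : ℕ) (hp : p.Prime) (hm : 0 < m) :
    bell (p ^ m) ≡ m + 1 [MOD p] := by
  haveI := Fact.mk hp
  rw [← ZMod.natCast_eq_natCast_iff]
  set N := p ^ m with hN
  -- the indicator coefficients
  set d : ℕ → ZMod p := fun k => ∑ j ∈ Finset.range (m + 1), if p ^ j = k then 1 else 0 with hd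
  have hpow_le : ∀ j ∈ Finset.range (m + 1), p ^ j ∈ Finset.range (N + 1) := by
    intro j hj
    rw [Finset.mem_range, Nat.lt_succ_iff, hN]
    exact Nat.pow_le_pow_right hp.one_lt.le (Nat.lt_succ_iff.mp (Finset.mem_range.mp hj))
  have hmain : ∑ k ∈ Finset.range (N + 1), C ((stirling N k : ZMod p)) * ffp p k
      = ∑ k ∈ Finset.range (N + 1), C (d k) * ffp p k := by
    rw [← X_pow_eq_sum_stirling p N, hN, X_pow_p_pow']
    have : ∀ k, C (d k) * ffp p k
        = ∑ j ∈ Finset.range (m + 1), if p ^ j = k then ffp p k else 0 := by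
      intro k
      rw [hd]
      simp only [map_sum, Finset.sum_mul, apply_ite C, map_one, map_zero, ite_mul,
        one_mul, zero_mul]
    simp only [this]
    rw [Finset.sum_comm]
    refine Finset.sum_congr rfl fun j hj => ?_
    rw [Finset.sum_ite_eq (Finset.range (N + 1)) (p ^ j) (fun k => ffp p k),
      if_pos (hpow_le j hj)]
  have hcoeff := ffp_ext p N _ _ hmain
  have hbell : ((bell N : ℕ) : ZMod p) = ∑ k ∈ Finset.range (N + 1), (stirling N k : ZMod p) := by
    rw [bell]
    push_cast
    rfl
  rw [hbell]
  have : ∑ k ∈ Finset.range (N + 1), ((stirling N k : ℕ) : ZMod p)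
      = ∑ k ∈ Finset.range (N + 1), d k := by
    refine Finset.sum_congr rfl fun k hk => ?_
    exact hcoeff k (Nat.lt_succ_iff.mp (Finset.mem_range.mp hk))
  rw [this, hd, Finset.sum_comm]
  have : ∀ j ∈ Finset.range (m + 1),
      (∑ k ∈ Finset.range (N + 1), if p ^ j = k then (1 : ZMod p) else 0) = 1 := by
    intro j hj
    rw [Finset.sum_ite_eq (Finset.range (N + 1)) (p ^ j) (fun _ => (1 : ZMod p)),
      if_pos (hpow_le j hj)]
  rw [Finset.sum_congr rfl this]
  simp [Finset.sum_const]
end
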